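/- arXiv:2310.19988 — 3 statements merged into one kernel-verified Lean document; each statement's English description precedes it below -/
import Mathlib

section
/- Fix y, s ∈ {0,1} and a ∈ 𝒜, and assume: consistency (P-almost surely, if D = 0 then Y = Y⁰); Y⁰ is conditionally independent of (A, D) given (X, S), i.e. for all y', d ∈ {0,1}, a' ∈ 𝒜, and all x, s' with P(X=x, S=s') > 0, P(Y⁰=y', A=a', D=d | X=x, S=s') = P(Y⁰=y' | X=x, S=s') · P(A=a', D=d | X=x, S=s'); and positivity given (X,S), i.e. P(D=0, S=s', X=x) > 0 whenever P(S=s', X=x) > 0. Then the joint law of the group label, the prediction, and the potential outcome is identified: P(A=a, S=s, Y⁰=y) = Σ_{x∈𝒳, P(S=s,X=x)>0} μ₀(y,s,x) · P(A=a, S=s, X=x), i.e. P(A=a, S=s, Y⁰=y) = E[μ₀(y,s,X) · 1{A=a} · 1{S=s}]. -/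
open MeasureTheory

/-- `pr P E` is the probability of the event `E` as a real number. -/
noncomputable def pr {Ω : Type*} [MeasurableSpace Ω] (P : Measure Ω) (E : Set Ω) : ℝ :=
  (P E).toReal

/-- `cpr P E F = P(E | F) = P(E ∩ F) / P(F)`, the conditional probability of `E` given `F`. -/
noncomputable def cpr {Ω : Type*} [MeasurableSpace Ω] (P : Measure Ω) (E F : Set Ω) : ℝ :=
  pr P (E ∩ F) / pr P F

section aux
variable {Ω : Type*} [MeasurableSpace Ω] (P : Measure Ω)

lemma pr_nonneg (E : Set Ω) : 0 ≤ pr P E := ENNReal.toReal_nonneg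

lemma pr_mono [IsFiniteMeasure P] {E F : Set Ω} (h : E ⊆ F) : pr P E ≤ pr P F :=
  ENNReal.toReal_mono (measure_ne_top P F) (measure_mono h)

lemma pr_congr {E F : Set Ω} (h : E = F) : pr P E = pr P F := by rw [h]

lemma cpr_mul {E F : Set Ω} (hF : pr P F ≠ 0) : cpr P E F * pr P F = pr P (E ∩ F) :=
  div_mul_cancel₀ _ hF

lemma pr_partition {β : Type*} [MeasurableSpace β] [MeasurableSingletonClass β] [Countable β]
    [IsFiniteMeasure P] (E : Set Ω) (hE : MeasurableSet E)
    (V : Ω → β) (hV : Measurable V) :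
    pr P E = ∑' v, pr P (E ∩ {ω | V ω = v}) := by
  have hU : E = ⋃ v, E ∩ {ω | V ω = v} := by ext ω; simp
  have hmeas : ∀ v : β, MeasurableSet (E ∩ {ω | V ω = v}) :=
    fun v => hE.inter (hV (measurableSet_singleton v))
  have hdisj : Pairwise (Function.onFun Disjoint fun v => E ∩ {ω | V ω = v}) := by
    intro i j hij
    simp only [Function.onFun, Set.disjoint_left]
    rintro ω ⟨-, h1⟩ ⟨-, h2⟩
    exact hij (h1.symm.trans h2)
  have hPE : P E = ∑' v, P (E ∩ {ω | V ω = v}) := by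
    conv_lhs => rw [hU]
    exact measure_iUnion hdisj hmeas
  rw [pr, hPE, ENNReal.tsum_toReal_eq (fun v => measure_ne_top P _)]
  rfl

end aux

/-- under consistency, conditional independence of `Y⁰` and `(A, D)` given `(X, S)`,
and positivity given `(X, S)`, the joint law of the group label, the prediction, and the
potential outcome is identified:
`P(A=a, S=s, Y⁰=y) = Σ_x μ₀(y,s,x) · P(A=a, S=s, X=x) = E[μ₀(y,s,X)·1{A=a}·1{S=s}]`,
where `μ₀(y,s,x) = P(Y=y | D=0, S=s, X=x)`.
Binary variables are modelled as `Bool`-valued, with `1 = true` and `0 = false`. -/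
theorem stmt_4
    {Ω 𝒜 𝒳 : Type*} [MeasurableSpace Ω]
    [MeasurableSpace 𝒜] [MeasurableSingletonClass 𝒜] [Countable 𝒜] [Nonempty 𝒜]
    [MeasurableSpace 𝒳] [MeasurableSingletonClass 𝒳] [Countable 𝒳] [Nonempty 𝒳]
    (P : Measure Ω) [IsProbabilityMeasure P]
    (Y0 Y D S : Ω → Bool) (A : Ω → 𝒜) (X : Ω → 𝒳)
    (hY0 : Measurable Y0) (hY : Measurable Y) (hD : Measurable D) (hS : Measurable S)
    (hA : Measurable A) (hX : Measurable X)
    (y s : Bool) (a : 𝒜)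
    (hcons : ∀ᵐ ω ∂P, D ω = false → Y ω = Y0 ω)
    (hCI : ∀ (y' d : Bool) (a' : 𝒜) (x : 𝒳) (s' : Bool),
      0 < pr P {ω | X ω = x ∧ S ω = s'} →
      cpr P {ω | Y0 ω = y' ∧ A ω = a' ∧ D ω = d} {ω | X ω = x ∧ S ω = s'} =
        cpr P {ω | Y0 ω = y'} {ω | X ω = x ∧ S ω = s'} *
          cpr P {ω | A ω = a' ∧ D ω = d} {ω | X ω = x ∧ S ω = s'})
    (hposD : ∀ (s' : Bool) (x : 𝒳), 0 < pr P {ω | S ω = s' ∧ X ω = x} →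
      0 < pr P {ω | D ω = false ∧ S ω = s' ∧ X ω = x}) :
    pr P {ω | A ω = a ∧ S ω = s ∧ Y0 ω = y} =
      ∑' x : 𝒳,
        cpr P {ω | Y ω = y} {ω | D ω = false ∧ S ω = s ∧ X ω = x} *
          pr P {ω | A ω = a ∧ S ω = s ∧ X ω = x} := by
  classical
  have hmE : MeasurableSet {ω | A ω = a ∧ S ω = s ∧ Y0 ω = y} :=
    (hA (measurableSet_singleton a)).inter
      ((hS (measurableSet_singleton s)).inter (hY0 (measurableSet_singleton y)))
  rw [pr_partition P _ hmE X hX]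
  refine tsum_congr fun x => ?_
  set Fx : Set Ω := {ω | X ω = x ∧ S ω = s} with hFx
  have hsub1 : {ω | A ω = a ∧ S ω = s ∧ Y0 ω = y} ∩ {ω | X ω = x} ⊆ Fx := by
    rintro ω ⟨⟨_, hs', _⟩, hx⟩; exact ⟨hx, hs'⟩
  have hsub2 : {ω | A ω = a ∧ S ω = s ∧ X ω = x} ⊆ Fx := by
    rintro ω ⟨_, hs', hx⟩; exact ⟨hx, hs'⟩
  rcases (pr_nonneg P Fx).lt_or_eq with hF | hF
  · -- positive case
    have hFne : pr P Fx ≠ 0 := ne_of_gt hF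
    have hF' : 0 < pr P {ω | S ω = s ∧ X ω = x} := by
      have : {ω | S ω = s ∧ X ω = x} = Fx := by ext ω; exact and_comm
      rw [this]; exact hF
    have hGset : {ω | D ω = false ∧ S ω = s ∧ X ω = x} = {ω | D ω = false} ∩ Fx := by
      ext ω; simp only [Set.mem_inter_iff, Set.mem_setOf_eq, hFx]; tauto
    have hDne : pr P ({ω | D ω = false} ∩ Fx) ≠ 0 := by
      rw [← hGset]; exact ne_of_gt (hposD s x hF')
    -- CI in product form
    have step1 : ∀ (d : Bool) (a' : 𝒜),
        pr P ({ω | Y0 ω = y ∧ A ω = a' ∧ D ω = d} ∩ Fx) =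
          cpr P {ω | Y0 ω = y} Fx * pr P ({ω | A ω = a' ∧ D ω = d} ∩ Fx) := by
      intro d a'
      calc pr P ({ω | Y0 ω = y ∧ A ω = a' ∧ D ω = d} ∩ Fx)
          = cpr P {ω | Y0 ω = y ∧ A ω = a' ∧ D ω = d} Fx * pr P Fx :=
            (cpr_mul P hFne).symm
        _ = cpr P {ω | Y0 ω = y} Fx * (cpr P {ω | A ω = a' ∧ D ω = d} Fx * pr P Fx) := by
            rw [hCI y d a' x s hF, mul_assoc]
        _ = _ := by rw [cpr_mul P hFne]
    -- sum over a' : conditional independence of Y0 and D=false given Fx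
    have hm1 : MeasurableSet ({ω | Y0 ω = y ∧ D ω = false} ∩ Fx) :=
      ((hY0 (measurableSet_singleton y)).inter (hD (measurableSet_singleton false))).inter
        ((hX (measurableSet_singleton x)).inter (hS (measurableSet_singleton s)))
    have hm2 : MeasurableSet ({ω | D ω = false} ∩ Fx) :=
      (hD (measurableSet_singleton false)).inter
        ((hX (measurableSet_singleton x)).inter (hS (measurableSet_singleton s)))
    have step2 : pr P ({ω | Y0 ω = y ∧ D ω = false} ∩ Fx) =
        cpr P {ω | Y0 ω = y} Fx * pr P ({ω | D ω = false} ∩ Fx) := by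
      rw [pr_partition P _ hm1 A hA, pr_partition P _ hm2 A hA, ← tsum_mul_left]
      refine tsum_congr fun a' => ?_
      have e1 : ({ω | Y0 ω = y ∧ D ω = false} ∩ Fx) ∩ {ω | A ω = a'} =
          {ω | Y0 ω = y ∧ A ω = a' ∧ D ω = false} ∩ Fx := by
        ext ω; simp only [Set.mem_inter_iff, Set.mem_setOf_eq]; tauto
      have e2 : ({ω | D ω = false} ∩ Fx) ∩ {ω | A ω = a'} =
          {ω | A ω = a' ∧ D ω = false} ∩ Fx := by
        ext ω; simp only [Set.mem_inter_iff, Set.mem_setOf_eq]; tauto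
      rw [e1, e2, step1 false a']
    -- consistency
    have hcons' : pr P ({ω | Y ω = y} ∩ ({ω | D ω = false} ∩ Fx)) =
        pr P ({ω | Y0 ω = y ∧ D ω = false} ∩ Fx) := by
      unfold pr
      refine congrArg ENNReal.toReal (measure_congr ?_)
      rw [Filter.eventuallyEq_set]
      filter_upwards [hcons] with ω h
      simp only [Set.mem_inter_iff, Set.mem_setOf_eq, hFx]
      constructor
      · rintro ⟨hy', hd, hxs⟩; exact ⟨⟨(h hd).symm.trans hy', hd⟩, hxs⟩
      · rintro ⟨⟨hy', hd⟩, hxs⟩; exact ⟨(h hd).trans hy', hd, hxs⟩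
    -- identification of μ₀
    have hmu : cpr P {ω | Y ω = y} {ω | D ω = false ∧ S ω = s ∧ X ω = x} =
        cpr P {ω | Y0 ω = y} Fx := by
      rw [cpr, hGset, hcons', step2, mul_div_assoc, div_self hDne, mul_one]
    -- split both sides over D
    have hmL : MeasurableSet ({ω | A ω = a ∧ S ω = s ∧ Y0 ω = y} ∩ {ω | X ω = x}) :=
      hmE.inter (hX (measurableSet_singleton x))
    have hmR : MeasurableSet {ω | A ω = a ∧ S ω = s ∧ X ω = x} :=
      (hA (measurableSet_singleton a)).inter
        ((hS (measurableSet_singleton s)).inter (hX (measurableSet_singleton x)))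
    have hsplitL : pr P ({ω | A ω = a ∧ S ω = s ∧ Y0 ω = y} ∩ {ω | X ω = x}) =
        pr P ({ω | Y0 ω = y ∧ A ω = a ∧ D ω = false} ∩ Fx) +
          pr P ({ω | Y0 ω = y ∧ A ω = a ∧ D ω = true} ∩ Fx) := by
      rw [pr_partition P _ hmL D hD, tsum_bool]
      congr 1 <;> apply pr_congr <;> ext ω <;>
        simp only [Set.mem_inter_iff, Set.mem_setOf_eq, hFx] <;> tauto
    have hsplitR : pr P {ω | A ω = a ∧ S ω = s ∧ X ω = x} =
        pr P ({ω | A ω = a ∧ D ω = false} ∩ Fx) +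
          pr P ({ω | A ω = a ∧ D ω = true} ∩ Fx) := by
      rw [pr_partition P _ hmR D hD, tsum_bool]
      congr 1 <;> apply pr_congr <;> ext ω <;>
        simp only [Set.mem_inter_iff, Set.mem_setOf_eq, hFx] <;> tauto
    rw [hsplitL, step1 false a, step1 true a, hmu, hsplitR, mul_add]
  · -- zero case
    have h1 : pr P ({ω | A ω = a ∧ S ω = s ∧ Y0 ω = y} ∩ {ω | X ω = x}) = 0 :=
      le_antisymm (hF ▸ pr_mono P hsub1) (pr_nonneg P _)
    have h2 : pr P {ω | A ω = a ∧ S ω = s ∧ X ω = x} = 0 :=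
      le_antisymm (hF ▸ pr_mono P hsub2) (pr_nonneg P _)
    rw [h1, h2, mul_zero]
end

section
/- Fix y ∈ {0,1}, and assume: consistency (P-almost surely, if D = 0 then Y = Y⁰); ignorability, i.e. for all a ∈ 𝒜, x ∈ 𝒳, and s, y', d ∈ {0,1} with P(A=a, X=x, S=s) > 0, P(Y⁰=y', D=d | A=a, X=x, S=s) = P(Y⁰=y' | A=a, X=x, S=s) · P(D=d | A=a, X=x, S=s); and positivity, i.e. P(D=0, A=a, X=x, S=s) > 0 whenever P(A=a, X=x, S=s) > 0. Then the inverse-probability-weighted mean recovers the marginal potential-outcome probability: E[ 1{D=0} · 1{Y=y} / (1 − π(A, X, S)) ] = P(Y⁰ = y). -/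
open MeasureTheory

section

variable {Ω : Type*} [MeasurableSpace Ω] (P : Measure Ω)

lemma pr_eq_measureReal (E : Set Ω) : pr P E = P.real E := rfl

lemma tsum_pr_inter_fiber [IsFiniteMeasure P] {β : Type*} [MeasurableSpace β]
    [MeasurableSingletonClass β] [Countable β] {f : Ω → β} (hf : Measurable f) (E : Set Ω) :
    ∑' b, pr P (E ∩ {ω | f ω = b}) = pr P E := by
  have hfiber : ∀ b, P (E ∩ {ω | f ω = b}) = P.restrict E (f ⁻¹' {b}) := fun b => by
    rw [Measure.restrict_apply (hf (measurableSet_singleton b)), Set.inter_comm]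
    rfl
  simp only [pr, hfiber]
  rw [← ENNReal.tsum_toReal_eq fun _ => measure_ne_top _ _,
    ← measure_iUnion (fun b b' hbb' => (Set.disjoint_singleton.2 hbb').preimage f)
      fun b => hf (measurableSet_singleton b),
    ← Set.preimage_iUnion, Set.iUnion_singleton_eq_range, Set.range_id', Set.preimage_univ,
    Measure.restrict_apply_univ]

lemma cpr_false_eq_one_sub_cpr_true [IsFiniteMeasure P] {D : Ω → Bool} (hD : Measurable D)
    {F : Set Ω} (hF : pr P F ≠ 0) :
    cpr P {ω | D ω = false} F = 1 - cpr P {ω | D ω = true} F := by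
  have hsplit := measureReal_inter_add_sdiff (μ := P) (s := F) (t := {ω | D ω = true})
    (hD (measurableSet_singleton true))
  have hfalse : F \ {ω | D ω = true} = {ω | D ω = false} ∩ F := by
    ext ω
    simp [and_comm]
  rw [Set.inter_comm, hfalse] at hsplit
  rw [cpr, cpr, eq_sub_iff_add_eq, ← add_div, div_eq_one_iff_eq hF, pr_eq_measureReal,
    pr_eq_measureReal, pr_eq_measureReal, ← hsplit, add_comm]

lemma ipw_term_eq_pr_potential_outcome [IsFiniteMeasure P] {Y0 Y D : Ω → Bool} {y : Bool}
    (hD : Measurable D) (hcons : ∀ᵐ ω ∂P, D ω = false → Y ω = Y0 ω) {F : Set Ω}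
    (hig : 0 < pr P F →
      cpr P {ω | Y0 ω = y ∧ D ω = false} F =
        cpr P {ω | Y0 ω = y} F * cpr P {ω | D ω = false} F)
    (hpos : 0 < pr P F → 0 < pr P ({ω | D ω = false} ∩ F)) :
    pr P ({ω | D ω = false} ∩ ({ω | Y ω = y} ∩ F)) / (1 - cpr P {ω | D ω = true} F) =
      pr P ({ω | Y0 ω = y} ∩ F) := by
  rcases (show 0 ≤ pr P F from measureReal_nonneg).eq_or_lt with hF | hF
  · rw [pr_eq_measureReal, pr_eq_measureReal,
      measureReal_mono_null (fun ω h => h.2.2) hF.symm,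
      measureReal_mono_null Set.inter_subset_right hF.symm, zero_div]
  have hconsistent : pr P ({ω | D ω = false} ∩ ({ω | Y ω = y} ∩ F)) =
      pr P ({ω | Y0 ω = y ∧ D ω = false} ∩ F) := by
    refine measureReal_congr (Filter.eventuallyEq_set.2 ?_)
    filter_upwards [hcons] with ω hω
    simp only [Set.mem_inter_iff, Set.mem_ofPred_eq]
    constructor
    · rintro ⟨hd, hy, hωF⟩
      exact ⟨⟨hω hd ▸ hy, hd⟩, hωF⟩
    · rintro ⟨⟨hy, hd⟩, hωF⟩
      exact ⟨hd, (hω hd).symm ▸ hy, hωF⟩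
  have huntreated : cpr P {ω | D ω = false} F ≠ 0 := (div_pos (hpos hF) hF).ne'
  rw [hconsistent, ← cpr_false_eq_one_sub_cpr_true P hD hF.ne']
  calc pr P ({ω | Y0 ω = y ∧ D ω = false} ∩ F) / cpr P {ω | D ω = false} F
      = cpr P {ω | Y0 ω = y ∧ D ω = false} F * pr P F / cpr P {ω | D ω = false} F := by
        rw [cpr.eq_1 P {ω | Y0 ω = y ∧ D ω = false}, div_mul_cancel₀ _ hF.ne']
    _ = cpr P {ω | Y0 ω = y} F * pr P F := by
        rw [hig hF, mul_right_comm, mul_div_cancel_right₀ _ huntreated]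
    _ = pr P ({ω | Y0 ω = y} ∩ F) := div_mul_cancel₀ _ hF.ne'

end

theorem stmt_10_general
    {Ω 𝒜 𝒳 : Type*} [MeasurableSpace Ω]
    [MeasurableSpace 𝒜] [MeasurableSingletonClass 𝒜] [Countable 𝒜]
    [MeasurableSpace 𝒳] [MeasurableSingletonClass 𝒳] [Countable 𝒳]
    (P : Measure Ω) [IsProbabilityMeasure P]
    (Y0 Y D S : Ω → Bool) (A : Ω → 𝒜) (X : Ω → 𝒳)
    (hD : Measurable D) (hS : Measurable S)
    (hA : Measurable A) (hX : Measurable X)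
    (y : Bool)
    (hcons : ∀ᵐ ω ∂P, D ω = false → Y ω = Y0 ω)
    (hig : ∀ (a : 𝒜) (x : 𝒳) (s y' d : Bool),
      0 < pr P {ω | A ω = a ∧ X ω = x ∧ S ω = s} →
      cpr P {ω | Y0 ω = y' ∧ D ω = d} {ω | A ω = a ∧ X ω = x ∧ S ω = s} =
        cpr P {ω | Y0 ω = y'} {ω | A ω = a ∧ X ω = x ∧ S ω = s} *
          cpr P {ω | D ω = d} {ω | A ω = a ∧ X ω = x ∧ S ω = s})
    (hposD : ∀ (a : 𝒜) (x : 𝒳) (s : Bool),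
      0 < pr P {ω | A ω = a ∧ X ω = x ∧ S ω = s} →
      0 < pr P {ω | D ω = false ∧ A ω = a ∧ X ω = x ∧ S ω = s}) :
    (∑' (a : 𝒜) (x : 𝒳) (s : Bool),
        pr P {ω | D ω = false ∧ Y ω = y ∧ A ω = a ∧ X ω = x ∧ S ω = s} /
          (1 - cpr P {ω | D ω = true} {ω | A ω = a ∧ X ω = x ∧ S ω = s})) =
      pr P {ω | Y0 ω = y} := by
  calc _ = ∑' (a : 𝒜) (x : 𝒳) (s : Bool),
          pr P ({ω | Y0 ω = y} ∩ {ω | A ω = a ∧ X ω = x ∧ S ω = s}) :=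
        tsum_congr fun a => tsum_congr fun x => tsum_congr fun s =>
          ipw_term_eq_pr_potential_outcome P hD hcons (hig a x s y false) (hposD a x s)
    _ = pr P {ω | Y0 ω = y} := by
        simp only [Set.ofPred_and, ← Set.inter_assoc, tsum_pr_inter_fiber P hS,
          tsum_pr_inter_fiber P hX, tsum_pr_inter_fiber P hA]

/-- under consistency, ignorability, and positivity, the
inverse-probability-weighted mean recovers the marginal potential-outcome probability:
`E[1{D=0}·1{Y=y}/(1−π(A,X,S))] = P(Y⁰=y)`, where `π(a,x,s) = P(D=1 | A=a, X=x, S=s)` and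
the expectation is the series
`Σ_{(a,x,s)} P(D=0, Y=y, A=a, X=x, S=s)/(1−π(a,x,s))`.
Binary variables are modelled as `Bool`-valued, with `1 = true` and `0 = false`. -/
theorem stmt_10
    {Ω 𝒜 𝒳 : Type*} [MeasurableSpace Ω]
    [MeasurableSpace 𝒜] [MeasurableSingletonClass 𝒜] [Countable 𝒜] [Nonempty 𝒜]
    [MeasurableSpace 𝒳] [MeasurableSingletonClass 𝒳] [Countable 𝒳] [Nonempty 𝒳]
    (P : Measure Ω) [IsProbabilityMeasure P]
    (Y0 Y D S : Ω → Bool) (A : Ω → 𝒜) (X : Ω → 𝒳)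
    (hY0 : Measurable Y0) (hY : Measurable Y) (hD : Measurable D) (hS : Measurable S)
    (hA : Measurable A) (hX : Measurable X)
    (y : Bool)
    (hcons : ∀ᵐ ω ∂P, D ω = false → Y ω = Y0 ω)
    (hig : ∀ (a : 𝒜) (x : 𝒳) (s y' d : Bool),
      0 < pr P {ω | A ω = a ∧ X ω = x ∧ S ω = s} →
      cpr P {ω | Y0 ω = y' ∧ D ω = d} {ω | A ω = a ∧ X ω = x ∧ S ω = s} =
        cpr P {ω | Y0 ω = y'} {ω | A ω = a ∧ X ω = x ∧ S ω = s} *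
          cpr P {ω | D ω = d} {ω | A ω = a ∧ X ω = x ∧ S ω = s})
    (hposD : ∀ (a : 𝒜) (x : 𝒳) (s : Bool),
      0 < pr P {ω | A ω = a ∧ X ω = x ∧ S ω = s} →
      0 < pr P {ω | D ω = false ∧ A ω = a ∧ X ω = x ∧ S ω = s}) :
    (∑' (a : 𝒜) (x : 𝒳) (s : Bool),
        pr P {ω | D ω = false ∧ Y ω = y ∧ A ω = a ∧ X ω = x ∧ S ω = s} /
          (1 - cpr P {ω | D ω = true} {ω | A ω = a ∧ X ω = x ∧ S ω = s})) =
      pr P {ω | Y0 ω = y} :=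
  stmt_10_general P Y0 Y D S A X hD hS hA hX y hcons hig hposD
end

section
/- Assume P(Y⁰=1) > 0, consistency (P-almost surely, if D = 0 then Y = Y⁰), ignorability (for all a ∈ 𝒜, x ∈ 𝒳, and s, y, d ∈ {0,1} with P(A=a, X=x, S=s) > 0, P(Y⁰=y, D=d | A=a, X=x, S=s) = P(Y⁰=y | A=a, X=x, S=s) · P(D=d | A=a, X=x, S=s)), and positivity (P(D=0, A=a, X=x, S=s) > 0 whenever P(A=a, X=x, S=s) > 0). Then the overall counterfactual false negative rate is identified by the inverse-probability-weighted ratio: P(S=0 | Y⁰=1) = E[ 1{D=0} · 1{S=0} · 1{Y=1} / (1 − π(A,X,S)) ] / E[ 1{D=0} · 1{Y=1} / (1 − π(A,X,S)) ], where the denominator is strictly positive since it equals P(Y⁰=1). -/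
open MeasureTheory

lemma sum_cells {Ω 𝒜 𝒳 : Type*} [MeasurableSpace Ω]
    [MeasurableSpace 𝒜] [MeasurableSingletonClass 𝒜] [Countable 𝒜]
    [MeasurableSpace 𝒳] [MeasurableSingletonClass 𝒳] [Countable 𝒳]
    (P : Measure Ω) [IsFiniteMeasure P]
    {A : Ω → 𝒜} {X : Ω → 𝒳} {S : Ω → Bool}
    (hA : Measurable A) (hX : Measurable X) (hS : Measurable S)
    (E : Set Ω) (hE : MeasurableSet E) :
    ∑' (a : 𝒜) (x : 𝒳) (s : Bool),
      pr P (E ∩ {ω | A ω = a ∧ X ω = x ∧ S ω = s}) = pr P E := by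
  have hT : Measurable (fun ω => (A ω, X ω, S ω) : Ω → 𝒜 × 𝒳 × Bool) :=
    hA.prodMk (hX.prodMk hS)
  have hmeas : ∀ (a : 𝒜) (x : 𝒳) (s : Bool),
      MeasurableSet {ω | A ω = a ∧ X ω = x ∧ S ω = s} := by
    intro a x s
    have h : {ω | A ω = a ∧ X ω = x ∧ S ω = s}
        = (fun ω => (A ω, X ω, S ω)) ⁻¹' {(a, x, s)} := by
      ext ω; simp [Prod.ext_iff]
    rw [h]; exact hT (measurableSet_singleton _)
  have hsum : ∑' (p : 𝒜 × 𝒳 × Bool),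
      P (E ∩ {ω | A ω = p.1 ∧ X ω = p.2.1 ∧ S ω = p.2.2}) = P E := by
    rw [← measure_iUnion]
    · congr 1
      ext ω
      simp only [Set.mem_iUnion, Set.mem_inter_iff, Set.mem_setOf_eq]
      constructor
      · rintro ⟨p, h, -⟩; exact h
      · intro h; exact ⟨(A ω, X ω, S ω), h, rfl, rfl, rfl⟩
    · intro p q hpq
      simp only [Set.disjoint_left]
      rintro ω ⟨-, h1⟩ ⟨-, h2⟩
      exact hpq (Prod.ext (h1.1.symm.trans h2.1)
        (Prod.ext (h1.2.1.symm.trans h2.2.1) (h1.2.2.symm.trans h2.2.2)))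
    · exact fun p => hE.inter (hmeas _ _ _)
  have H : ∑' (a : 𝒜) (x : 𝒳) (s : Bool),
      P (E ∩ {ω | A ω = a ∧ X ω = x ∧ S ω = s}) = P E := by
    rw [← hsum, ENNReal.tsum_prod
      (f := fun a (q : 𝒳 × Bool) => P (E ∩ {ω | A ω = a ∧ X ω = q.1 ∧ S ω = q.2}))]
    exact tsum_congr fun a =>
      (ENNReal.tsum_prod (f := fun x (s : Bool) =>
        P (E ∩ {ω | A ω = a ∧ X ω = x ∧ S ω = s}))).symm
  have hne : ∀ (F : Set Ω), P F ≠ ⊤ := fun F => measure_ne_top P F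
  have hfin1 : ∀ a : 𝒜, (∑' (x : 𝒳) (s : Bool),
      P (E ∩ {ω | A ω = a ∧ X ω = x ∧ S ω = s})) ≠ ⊤ :=
    ENNReal.ne_top_of_tsum_ne_top (H ▸ hne E)
  have hfin2 : ∀ (a : 𝒜) (x : 𝒳), (∑' (s : Bool),
      P (E ∩ {ω | A ω = a ∧ X ω = x ∧ S ω = s})) ≠ ⊤ :=
    fun a => ENNReal.ne_top_of_tsum_ne_top (hfin1 a)
  calc ∑' (a : 𝒜) (x : 𝒳) (s : Bool),
        pr P (E ∩ {ω | A ω = a ∧ X ω = x ∧ S ω = s})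
      = ∑' (a : 𝒜) (x : 𝒳), (∑' (s : Bool),
          P (E ∩ {ω | A ω = a ∧ X ω = x ∧ S ω = s})).toReal := by
        refine tsum_congr fun a => tsum_congr fun x => ?_
        exact (ENNReal.tsum_toReal_eq fun s => hne _).symm
    _ = ∑' (a : 𝒜), (∑' (x : 𝒳) (s : Bool),
          P (E ∩ {ω | A ω = a ∧ X ω = x ∧ S ω = s})).toReal := by
        refine tsum_congr fun a => ?_
        exact (ENNReal.tsum_toReal_eq fun x => hfin2 a x).symm
    _ = (∑' (a : 𝒜) (x : 𝒳) (s : Bool),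
          P (E ∩ {ω | A ω = a ∧ X ω = x ∧ S ω = s})).toReal :=
        (ENNReal.tsum_toReal_eq fun a => hfin1 a).symm
    _ = pr P E := congrArg ENNReal.toReal H

lemma pr_zero_of_subset {Ω : Type*} [MeasurableSpace Ω] (P : Measure Ω) [IsFiniteMeasure P]
    {E F : Set Ω} (h : E ⊆ F) (hF : pr P F = 0) : pr P E = 0 := by
  have hF0 : P F = 0 := by
    rcases (ENNReal.toReal_eq_zero_iff _).mp hF with h0 | h0
    · exact h0
    · exact absurd h0 (measure_ne_top P F)
  simp [pr, measure_mono_null h hF0]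

lemma key_cell {Ω : Type*} [MeasurableSpace Ω] (P : Measure Ω) [IsProbabilityMeasure P]
    (Y0 Y D : Ω → Bool) (C : Set Ω) (hC : MeasurableSet C) (hDm : Measurable D)
    (hcons : ∀ᵐ ω ∂P, D ω = false → Y ω = Y0 ω)
    (hig : 0 < pr P C →
      cpr P {ω | Y0 ω = true ∧ D ω = false} C =
        cpr P {ω | Y0 ω = true} C * cpr P {ω | D ω = false} C)
    (hposD : 0 < pr P C → 0 < pr P ({ω | D ω = false} ∩ C)) :
    pr P ({ω | D ω = false ∧ Y ω = true} ∩ C) / (1 - cpr P {ω | D ω = true} C)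
      = pr P ({ω | Y0 ω = true} ∩ C) := by
  rcases eq_or_lt_of_le (ENNReal.toReal_nonneg : (0:ℝ) ≤ pr P C) with hq | hq
  · have hq0 : pr P C = 0 := hq.symm
    rw [pr_zero_of_subset P Set.inter_subset_right hq0,
      pr_zero_of_subset P Set.inter_subset_right hq0, cpr, hq0, div_zero, zero_div]
  · have hq' : pr P C ≠ 0 := ne_of_gt hq
    have hr : 0 < pr P ({ω | D ω = false} ∩ C) := hposD hq
    have hr' : pr P ({ω | D ω = false} ∩ C) ≠ 0 := ne_of_gt hr
    have hsplit : pr P ({ω | D ω = true} ∩ C) + pr P ({ω | D ω = false} ∩ C) = pr P C := by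
      have hun : ({ω | D ω = true} ∩ C) ∪ ({ω | D ω = false} ∩ C) = C := by
        ext ω
        simp only [Set.mem_union, Set.mem_inter_iff, Set.mem_setOf_eq]
        constructor
        · rintro (⟨-, h⟩ | ⟨-, h⟩) <;> exact h
        · intro h
          cases hb : D ω
          · exact Or.inr ⟨rfl, h⟩
          · exact Or.inl ⟨rfl, h⟩
      have hdisj : Disjoint ({ω | D ω = true} ∩ C) ({ω | D ω = false} ∩ C) := by
        simp only [Set.disjoint_left]
        rintro ω ⟨h1, -⟩ ⟨h2, -⟩
        simp only [Set.mem_setOf_eq] at h1 h2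
        simp [h1] at h2
      have hmeasB : MeasurableSet ({ω | D ω = false} ∩ C) :=
        (hDm (measurableSet_singleton false)).inter hC
      have := measure_union (μ := P) hdisj hmeasB
      rw [hun] at this
      simp only [pr]
      rw [this, ENNReal.toReal_add (measure_ne_top P _) (measure_ne_top P _)]
    have h1mπ : 1 - cpr P {ω | D ω = true} C = pr P ({ω | D ω = false} ∩ C) / pr P C := by
      rw [cpr]
      field_simp
      linarith [hsplit]
    have hY : pr P ({ω | D ω = false ∧ Y ω = true} ∩ C)
        = pr P ({ω | Y0 ω = true ∧ D ω = false} ∩ C) := by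
      have hae : ({ω | D ω = false ∧ Y ω = true} ∩ C : Set Ω) =ᵐ[P]
          ({ω | Y0 ω = true ∧ D ω = false} ∩ C : Set Ω) := by
        rw [Filter.eventuallyEq_set]
        filter_upwards [hcons] with ω h
        simp only [Set.mem_inter_iff, Set.mem_setOf_eq]
        constructor
        · rintro ⟨⟨h1, h2⟩, h3⟩; exact ⟨⟨(h h1) ▸ h2, h1⟩, h3⟩
        · rintro ⟨⟨h0, h1⟩, h3⟩; exact ⟨⟨h1, (h h1).trans h0⟩, h3⟩
      exact congrArg ENNReal.toReal (measure_congr hae)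
    have h2 := hig hq
    rw [cpr, cpr, cpr] at h2
    rw [hY, h1mπ]
    rw [div_eq_iff (div_ne_zero hr' hq')]
    have hx : pr P ({ω | Y0 ω = true ∧ D ω = false} ∩ C)
        = pr P C * (pr P ({ω | Y0 ω = true ∧ D ω = false} ∩ C) / pr P C) := by
      field_simp
    rw [hx, h2]
    field_simp

/-- under consistency, ignorability, and positivity, the overall counterfactual
false negative rate is identified by the inverse-probability-weighted ratio:
`P(S=0 | Y⁰=1) = E[1{D=0}·1{S=0}·1{Y=1}/(1−π(A,X,S))] / E[1{D=0}·1{Y=1}/(1−π(A,X,S))]`,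
where `π(a,x,s) = P(D=1 | A=a, X=x, S=s)`, the expectations are series over the level sets of
`(A, X, S)` (the indicator `1{S=0}` is encoded by also requiring `S ω = false` in the event), and
the denominator is strictly positive since it equals `P(Y⁰=1)`.
Binary variables are modelled as `Bool`-valued, with `1 = true` and `0 = false`. -/
theorem stmt_13
    {Ω 𝒜 𝒳 : Type*} [MeasurableSpace Ω]
    [MeasurableSpace 𝒜] [MeasurableSingletonClass 𝒜] [Countable 𝒜] [Nonempty 𝒜]
    [MeasurableSpace 𝒳] [MeasurableSingletonClass 𝒳] [Countable 𝒳] [Nonempty 𝒳]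
    (P : Measure Ω) [IsProbabilityMeasure P]
    (Y0 Y D S : Ω → Bool) (A : Ω → 𝒜) (X : Ω → 𝒳)
    (hY0 : Measurable Y0) (hY : Measurable Y) (hD : Measurable D) (hS : Measurable S)
    (hA : Measurable A) (hX : Measurable X)
    (hpos : 0 < pr P {ω | Y0 ω = true})
    (hcons : ∀ᵐ ω ∂P, D ω = false → Y ω = Y0 ω)
    (hig : ∀ (a : 𝒜) (x : 𝒳) (s y d : Bool),
      0 < pr P {ω | A ω = a ∧ X ω = x ∧ S ω = s} →
      cpr P {ω | Y0 ω = y ∧ D ω = d} {ω | A ω = a ∧ X ω = x ∧ S ω = s} =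
        cpr P {ω | Y0 ω = y} {ω | A ω = a ∧ X ω = x ∧ S ω = s} *
          cpr P {ω | D ω = d} {ω | A ω = a ∧ X ω = x ∧ S ω = s})
    (hposD : ∀ (a : 𝒜) (x : 𝒳) (s : Bool),
      0 < pr P {ω | A ω = a ∧ X ω = x ∧ S ω = s} →
      0 < pr P {ω | D ω = false ∧ A ω = a ∧ X ω = x ∧ S ω = s}) :
    0 < (∑' (a : 𝒜) (x : 𝒳) (s : Bool),
          pr P {ω | D ω = false ∧ Y ω = true ∧ A ω = a ∧ X ω = x ∧ S ω = s} /
            (1 - cpr P {ω | D ω = true} {ω | A ω = a ∧ X ω = x ∧ S ω = s})) ∧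
    (∑' (a : 𝒜) (x : 𝒳) (s : Bool),
        pr P {ω | D ω = false ∧ Y ω = true ∧ A ω = a ∧ X ω = x ∧ S ω = s} /
          (1 - cpr P {ω | D ω = true} {ω | A ω = a ∧ X ω = x ∧ S ω = s})) =
      pr P {ω | Y0 ω = true} ∧
    cpr P {ω | S ω = false} {ω | Y0 ω = true} =
      (∑' (a : 𝒜) (x : 𝒳) (s : Bool),
          pr P {ω | D ω = false ∧ S ω = false ∧ Y ω = true ∧ A ω = a ∧ X ω = x ∧ S ω = s} /
            (1 - cpr P {ω | D ω = true} {ω | A ω = a ∧ X ω = x ∧ S ω = s})) /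
        (∑' (a : 𝒜) (x : 𝒳) (s : Bool),
            pr P {ω | D ω = false ∧ Y ω = true ∧ A ω = a ∧ X ω = x ∧ S ω = s} /
              (1 - cpr P {ω | D ω = true} {ω | A ω = a ∧ X ω = x ∧ S ω = s})) := by
  have hT : Measurable (fun ω => (A ω, X ω, S ω) : Ω → 𝒜 × 𝒳 × Bool) :=
    hA.prodMk (hX.prodMk hS)
  have hcellm : ∀ (a : 𝒜) (x : 𝒳) (s : Bool),
      MeasurableSet {ω | A ω = a ∧ X ω = x ∧ S ω = s} := by
    intro a x s
    have h : {ω | A ω = a ∧ X ω = x ∧ S ω = s}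
        = (fun ω => (A ω, X ω, S ω)) ⁻¹' {(a, x, s)} := by
      ext ω; simp [Prod.ext_iff]
    rw [h]; exact hT (measurableSet_singleton _)
  -- key termwise identity for the denominator
  have keyterm : ∀ (a : 𝒜) (x : 𝒳) (s : Bool),
      pr P {ω | D ω = false ∧ Y ω = true ∧ A ω = a ∧ X ω = x ∧ S ω = s} /
        (1 - cpr P {ω | D ω = true} {ω | A ω = a ∧ X ω = x ∧ S ω = s}) =
      pr P ({ω | Y0 ω = true} ∩ {ω | A ω = a ∧ X ω = x ∧ S ω = s}) := by
    intro a x s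
    have e0 : {ω | D ω = false ∧ Y ω = true ∧ A ω = a ∧ X ω = x ∧ S ω = s}
        = {ω | D ω = false ∧ Y ω = true} ∩ {ω | A ω = a ∧ X ω = x ∧ S ω = s} := by
      ext ω; simp only [Set.mem_setOf_eq, Set.mem_inter_iff]; tauto
    have e1 : {ω | D ω = false ∧ A ω = a ∧ X ω = x ∧ S ω = s}
        = {ω | D ω = false} ∩ {ω | A ω = a ∧ X ω = x ∧ S ω = s} := by
      ext ω; simp only [Set.mem_setOf_eq, Set.mem_inter_iff]
    rw [e0]
    exact key_cell P Y0 Y D _ (hcellm a x s) hD hcons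
      (fun h => hig a x s true false h)
      (fun h => e1 ▸ hposD a x s h)
  have hden : (∑' (a : 𝒜) (x : 𝒳) (s : Bool),
      pr P {ω | D ω = false ∧ Y ω = true ∧ A ω = a ∧ X ω = x ∧ S ω = s} /
        (1 - cpr P {ω | D ω = true} {ω | A ω = a ∧ X ω = x ∧ S ω = s}))
      = pr P {ω | Y0 ω = true} := by
    rw [← sum_cells P hA hX hS {ω | Y0 ω = true} (hY0 (measurableSet_singleton true))]
    exact tsum_congr fun a => tsum_congr fun x => tsum_congr fun s => keyterm a x s
  have key2 : ∀ (a : 𝒜) (x : 𝒳) (s : Bool),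
      pr P {ω | D ω = false ∧ S ω = false ∧ Y ω = true ∧ A ω = a ∧ X ω = x ∧ S ω = s} /
        (1 - cpr P {ω | D ω = true} {ω | A ω = a ∧ X ω = x ∧ S ω = s}) =
      pr P (({ω | S ω = false} ∩ {ω | Y0 ω = true}) ∩ {ω | A ω = a ∧ X ω = x ∧ S ω = s}) := by
    intro a x s
    cases s with
    | true =>
      have e2 : {ω | D ω = false ∧ S ω = false ∧ Y ω = true ∧ A ω = a ∧ X ω = x ∧ S ω = true}
          = (∅ : Set Ω) := by
        ext ω
        simp only [Set.mem_setOf_eq, Set.mem_empty_iff_false, iff_false]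
        rintro ⟨-, h2, -, -, -, h6⟩
        simp [h2] at h6
      have e3 : (({ω | S ω = false} ∩ {ω | Y0 ω = true}) ∩
          {ω | A ω = a ∧ X ω = x ∧ S ω = true}) = (∅ : Set Ω) := by
        ext ω
        simp only [Set.mem_inter_iff, Set.mem_setOf_eq, Set.mem_empty_iff_false, iff_false]
        rintro ⟨⟨h2, -⟩, -, -, h6⟩
        simp [h2] at h6
      rw [e2, e3]
      simp [pr]
    | false =>
      have e2 : {ω | D ω = false ∧ S ω = false ∧ Y ω = true ∧ A ω = a ∧ X ω = x ∧ S ω = false}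
          = {ω | D ω = false ∧ Y ω = true ∧ A ω = a ∧ X ω = x ∧ S ω = false} := by
        ext ω; simp only [Set.mem_setOf_eq]; tauto
      have e3 : (({ω | S ω = false} ∩ {ω | Y0 ω = true}) ∩
          {ω | A ω = a ∧ X ω = x ∧ S ω = false})
          = {ω | Y0 ω = true} ∩ {ω | A ω = a ∧ X ω = x ∧ S ω = false} := by
        ext ω
        simp only [Set.mem_inter_iff, Set.mem_setOf_eq]
        tauto
      rw [e2, e3]
      exact keyterm a x false
  have hnum : (∑' (a : 𝒜) (x : 𝒳) (s : Bool),
      pr P {ω | D ω = false ∧ S ω = false ∧ Y ω = true ∧ A ω = a ∧ X ω = x ∧ S ω = s} /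
        (1 - cpr P {ω | D ω = true} {ω | A ω = a ∧ X ω = x ∧ S ω = s}))
      = pr P ({ω | S ω = false} ∩ {ω | Y0 ω = true}) := by
    rw [← sum_cells P hA hX hS ({ω | S ω = false} ∩ {ω | Y0 ω = true})
      ((hS (measurableSet_singleton false)).inter (hY0 (measurableSet_singleton true)))]
    exact tsum_congr fun a => tsum_congr fun x => tsum_congr fun s => key2 a x s
  refine ⟨?_, ?_, ?_⟩
  · rw [hden]; exact hpos
  · exact hden
  · rw [hnum, hden]; rfl
end
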